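/- Let A = (Q, Σ, δ, ρ) be a connected invertible reversible Mealy automaton. Let m ≥ 1, let T be a connected component of A^m and let L be a connected component of A^{m+1}, and assume that every word of L has its length-m suffix in T. Then T equals the union over x ∈ Q of the left quotients x⁻¹L = {u ∈ Q^m : x·u ∈ L}, i.e., T = ⋃_{x∈Q} {u ∈ Q^m : x·u ∈ L}. -/

import Mathlib

/-!
Mealy automata: common definitions.

A Mealy automaton on stateset `Q` and alphabet `Γ` is given by transition
functions `δ : Γ → Q → Q` (for each input letter) and output functions
`ρ : Q → Γ → Γ` (for each state); it has a transition `x —i|j→ y` exactly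
when `δ i x = y` and `ρ x i = j`.
-/

/-- Extended output function `ρ_x : Γ* → Γ*` of a single state. -/
def rhoStar {Q Γ : Type*} (δ : Γ → Q → Q) (ρ : Q → Γ → Γ) : Q → List Γ → List Γ
  | _, [] => []
  | x, i :: s => ρ x i :: rhoStar δ ρ (δ i x) s

/-- `ρ_u : Γ* → Γ*` for a word `u = x₁⋯x_n` of states: `ρ_u = ρ_{x_n} ∘ ⋯ ∘ ρ_{x₁}`. -/
def rhoWord {Q Γ : Type*} (δ : Γ → Q → Q) (ρ : Q → Γ → Γ) : List Q → List Γ → List Γ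
  | [], s => s
  | x :: u, s => rhoWord δ ρ u (rhoStar δ ρ x s)

/-- `ρ_u : Γ → Γ` on single letters (the output function of the power automaton). -/
def rhoLetter {Q Γ : Type*} (ρ : Q → Γ → Γ) : List Q → Γ → Γ
  | [], i => i
  | x :: u, i => rhoLetter ρ u (ρ x i)

/-- Extended transition function `δ_i : Q* → Q*` (the transition function of powers). -/
def deltaStar {Q Γ : Type*} (δ : Γ → Q → Q) (ρ : Q → Γ → Γ) : Γ → List Q → List Q
  | _, [] => []
  | i, x :: u => δ i x :: deltaStar δ ρ (ρ x i) u

/-- Sequential application `δ_s = δ_{s_n} ∘ ⋯ ∘ δ_{s₁}` of the letters of a word `s`. -/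
def applyWord {S Γ : Type*} (d : Γ → S → S) : List Γ → S → S
  | [], x => x
  | i :: s, x => applyWord d s (d i x)

/-- The orbit `{δ_s(x) : s ∈ Γ*}` of a state: for reversible automata this is
exactly the (strongly) connected component of `x`. -/
def orbitOf {S Γ : Type*} (d : Γ → S → S) (x : S) : Set S :=
  {y | ∃ s : List Γ, applyWord d s x = y}

/-- An automaton is invertible when every output function is a permutation. -/
def MInvertible {Q Γ : Type*} (ρ : Q → Γ → Γ) : Prop := ∀ x, Function.Bijective (ρ x)

/-- An automaton is reversible when every transition function is a permutation. -/
def MReversible {Q Γ : Type*} (δ : Γ → Q → Q) : Prop := ∀ i, Function.Bijective (δ i)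

/-- Coreversibility: `δ_i(y) = δ_{i'}(z)` and `ρ_y(i) = ρ_z(i')` imply `y = z`. -/
def MCoreversible {Q Γ : Type*} (δ : Γ → Q → Q) (ρ : Q → Γ → Γ) : Prop :=
  ∀ y z : Q, ∀ i i' : Γ, δ i y = δ i' z → ρ y i = ρ z i' → y = z

/-- Bireversible: invertible, reversible and coreversible. -/
def MBireversible {Q Γ : Type*} (δ : Γ → Q → Q) (ρ : Q → Γ → Γ) : Prop :=
  MInvertible ρ ∧ MReversible δ ∧ MCoreversible δ ρ

/-- Connectedness: every state is reachable from every state. -/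
def MConnected {Q Γ : Type*} (δ : Γ → Q → Q) : Prop :=
  ∀ x y : Q, ∃ s : List Γ, applyWord δ s x = y

/-- Invertibility of a component `C` (as an automaton with stateset `C`). -/
def CompInvertible {S Γ : Type*} (r : S → Γ → Γ) (C : Set S) : Prop :=
  ∀ x ∈ C, Function.Bijective (r x)

/-- Reversibility of a component `C`: each transition function permutes `C`. -/
def CompReversible {S Γ : Type*} (d : Γ → S → S) (C : Set S) : Prop :=
  ∀ i : Γ, Set.BijOn (d i) C C

/-- Coreversibility of a component `C` (as an automaton with stateset `C`). -/
def CompCoreversible {S Γ : Type*} (d : Γ → S → S) (r : S → Γ → Γ) (C : Set S) : Prop :=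
  ∀ y ∈ C, ∀ z ∈ C, ∀ i i' : Γ, d i y = d i' z → r y i = r z i' → y = z

/-- Bireversibility of a component `C` (as an automaton with stateset `C`). -/
def CompBireversible {S Γ : Type*} (d : Γ → S → S) (r : S → Γ → Γ) (C : Set S) : Prop :=
  CompInvertible r C ∧ CompReversible d C ∧ CompCoreversible d r C

/-- Transition functions of the product `A × B` of two Mealy automata. -/
def prodD {Q Q' Γ : Type*} (δ : Γ → Q → Q) (ρ : Q → Γ → Γ) (δ' : Γ → Q' → Q') :
    Γ → Q × Q' → Q × Q' :=
  fun i p => (δ i p.1, δ' (ρ p.1 i) p.2)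

/-- Output functions of the product `A × B` of two Mealy automata. -/
def prodR {Q Q' Γ : Type*} (ρ : Q → Γ → Γ) (ρ' : Q' → Γ → Γ) : Q × Q' → Γ → Γ :=
  fun p i => ρ' p.2 (ρ p.1 i)

/-- `u^n`: the `n`-fold concatenation of a word with itself. -/
def wordPow {Q : Type*} (u : List Q) : ℕ → List Q
  | 0 => []
  | n + 1 => u ++ wordPow u n

/-!
Every word of `L` has its suffix in `T`, so `x⁻¹L ⊆ T`. Conversely, write `v0 = y·w0`, so that
`w0 ∈ T`. Since the transition maps of `A^m` are injective and `T` is finite, reachability in `T`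
is symmetric, so any `u ∈ T` is `δ_t(w0)` for some word `t`. By invertibility `t = ρ_y(s)` for
some `s`, and then `δ_s(y·w0) = δ_s(y)·δ_t(w0) = δ_s(y)·u` lies in `L`.
-/

open Function Set

section Orbit

variable {S Γ : Type*} (d : Γ → S → S)

lemma applyWord_append (s t : List Γ) (x : S) :
    applyWord d (s ++ t) x = applyWord d t (applyWord d s x) := by
  induction s generalizing x with
  | nil => rfl
  | cons i s ih => exact ih (d i x)

lemma applyWord_wordPow (s : List Γ) (k : ℕ) (x : S) :
    applyWord d (wordPow s k) x = (applyWord d s)^[k] x := by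
  induction k generalizing x with
  | zero => rfl
  | succ k ih => rw [wordPow, applyWord_append, ih, ← iterate_succ_apply]

lemma applyWord_injective (hd : ∀ i, Injective (d i)) (s : List Γ) :
    Injective (applyWord d s) := by
  induction s with
  | nil => exact injective_id
  | cons i s ih => exact ih.comp (hd i)

lemma mem_orbitOf_self (x : S) : x ∈ orbitOf d x := ⟨[], rfl⟩

lemma mem_orbitOf_trans {x y z : S} (hy : y ∈ orbitOf d x) (hz : z ∈ orbitOf d y) :
    z ∈ orbitOf d x := by
  obtain ⟨s, rfl⟩ := hy
  obtain ⟨t, rfl⟩ := hz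
  exact ⟨s ++ t, applyWord_append d s t x⟩

/-- In a finite orbit, each `applyWord d s` permutes the orbit, so some power of it brings
`applyWord d s x` back to `x`. -/
lemma mem_orbitOf_symm (hd : ∀ i, Injective (d i)) {x y : S} (hfin : (orbitOf d x).Finite)
    (hy : y ∈ orbitOf d x) : x ∈ orbitOf d y := by
  obtain ⟨s, rfl⟩ := hy
  have : Finite (orbitOf d x) := hfin.to_subtype
  have hmaps : MapsTo (applyWord d s) (orbitOf d x) (orbitOf d x) :=
    fun z hz => mem_orbitOf_trans d hz ⟨s, rfl⟩
  have hinj : Injective (hmaps.restrict _ _ _) :=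
    hmaps.restrict_inj.2 (applyWord_injective d hd s).injOn
  obtain ⟨n, hn, hper⟩ := hinj.mem_periodicPts ⟨x, mem_orbitOf_self d x⟩
  obtain ⟨k, rfl⟩ := Nat.exists_eq_succ_of_ne_zero hn.ne'
  have hx := congrArg Subtype.val hper.eq
  rw [hmaps.iterate_restrict, MapsTo.val_restrict_apply, iterate_succ_apply] at hx
  exact ⟨wordPow s k, by rwa [applyWord_wordPow]⟩

end Orbit

section Power

variable {Q Γ : Type*} (δ : Γ → Q → Q) (ρ : Q → Γ → Γ)

lemma length_deltaStar (i : Γ) (u : List Q) : (deltaStar δ ρ i u).length = u.length := by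
  induction u generalizing i with
  | nil => rfl
  | cons x u ih => simp only [deltaStar, List.length_cons, ih]

lemma length_applyWord_deltaStar (s : List Γ) (u : List Q) :
    (applyWord (deltaStar δ ρ) s u).length = u.length := by
  induction s generalizing u with
  | nil => rfl
  | cons i s ih => rw [applyWord, ih, length_deltaStar]

lemma finite_orbitOf_deltaStar [Finite Q] (u : List Q) : (orbitOf (deltaStar δ ρ) u).Finite :=
  (List.finite_length_eq (α := Q) (n := u.length)).subset fun _ ⟨s, hs⟩ => hs ▸ length_applyWord_deltaStar δ ρ s u

lemma deltaStar_injective (hδ : ∀ i, Injective (δ i)) (i : Γ) : Injective (deltaStar δ ρ i) := by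
  intro u v huv
  induction u generalizing i v with
  | nil => cases v <;> simp_all [deltaStar]
  | cons x u ih =>
    cases v with
    | nil => simp [deltaStar] at huv
    | cons y v =>
      obtain ⟨hxy, huv⟩ := List.cons.inj huv
      obtain rfl := hδ i hxy
      rw [ih _ huv]

lemma rhoStar_surjective (hρ : ∀ x, Surjective (ρ x)) (x : Q) : Surjective (rhoStar δ ρ x) := by
  intro t
  induction t generalizing x with
  | nil => exact ⟨[], rfl⟩
  | cons j t ih =>
    obtain ⟨i, rfl⟩ := hρ x j
    obtain ⟨s, hs⟩ := ih (δ i x)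
    exact ⟨i :: s, by rw [rhoStar, hs]⟩

lemma applyWord_deltaStar_cons (s : List Γ) (x : Q) (u : List Q) :
    applyWord (deltaStar δ ρ) s (x :: u) =
      applyWord δ s x :: applyWord (deltaStar δ ρ) (rhoStar δ ρ x s) u := by
  induction s generalizing x u with
  | nil => rfl
  | cons i s ih => exact ih (δ i x) (deltaStar δ ρ (ρ x i) u)

lemma exists_cons_mem_orbitOf_deltaStar (hρ : ∀ x, Surjective (ρ x)) (y : Q) {u w : List Q}
    (hw : w ∈ orbitOf (deltaStar δ ρ) u) : ∃ x, x :: w ∈ orbitOf (deltaStar δ ρ) (y :: u) := by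
  obtain ⟨t, rfl⟩ := hw
  obtain ⟨s, hs⟩ := rhoStar_surjective δ ρ hρ y t
  exact ⟨applyWord δ s y, s, by rw [applyWord_deltaStar_cons, hs]⟩

end Power

theorem top_component_eq_union_of_left_quotients_general
    {Q Γ : Type*} [Fintype Q]
    (δ : Γ → Q → Q) (ρ : Q → Γ → Γ)
    (hInv : MInvertible ρ) (hRev : MReversible δ)
    (m : ℕ) (u0 v0 : List Q)
    (hv0 : v0.length = m + 1)
    (hlift : ∀ w ∈ orbitOf (deltaStar δ ρ) v0,
      w.drop 1 ∈ orbitOf (deltaStar δ ρ) u0) :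
    orbitOf (deltaStar δ ρ) u0 =
      ⋃ x : Q, {u : List Q | x :: u ∈ orbitOf (deltaStar δ ρ) v0} := by
  obtain ⟨y, w0, rfl⟩ := List.exists_cons_of_length_eq_add_one hv0
  have hw0 : w0 ∈ orbitOf (deltaStar δ ρ) u0 := hlift _ (mem_orbitOf_self _ _)
  have hu0w0 : u0 ∈ orbitOf (deltaStar δ ρ) w0 :=
    mem_orbitOf_symm _ (deltaStar_injective δ ρ fun i => (hRev i).1)
      (finite_orbitOf_deltaStar δ ρ u0) hw0
  ext u
  simp only [mem_iUnion]
  constructor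
  · exact fun hu => exists_cons_mem_orbitOf_deltaStar δ ρ (fun x => (hInv x).2) y
      (mem_orbitOf_trans _ hu0w0 hu)
  · rintro ⟨x, hx⟩
    exact hlift _ hx

/-- Let `A` be a connected invertible reversible Mealy
automaton, `T` the connected component of a word `u0` of length `m ≥ 1` in
`A^m`, `L` the connected component of a word `v0` of length `m + 1` in
`A^{m+1}`; if every word of `L` has its length-`m` suffix in `T`, then `T`
is the union over `x ∈ Q` of the left quotients `x⁻¹L = {u : x·u ∈ L}`. -/
theorem top_component_eq_union_of_left_quotients
    {Q Γ : Type*} [Fintype Q] [Fintype Γ] [Nonempty Q] [Nonempty Γ]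
    (δ : Γ → Q → Q) (ρ : Q → Γ → Γ)
    (hConn : MConnected δ) (hInv : MInvertible ρ) (hRev : MReversible δ)
    (m : ℕ) (hm : 1 ≤ m) (u0 v0 : List Q)
    (hu0 : u0.length = m) (hv0 : v0.length = m + 1)
    (hlift : ∀ w ∈ orbitOf (deltaStar δ ρ) v0,
      w.drop 1 ∈ orbitOf (deltaStar δ ρ) u0) :
    orbitOf (deltaStar δ ρ) u0 =
      ⋃ x : Q, {u : List Q | x :: u ∈ orbitOf (deltaStar δ ρ) v0} :=
  top_component_eq_union_of_left_quotients_general δ ρ hInv hRev m u0 v0 hv0 hlift
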